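/- There exist random variables X₁, X₂ that are uncorrelated but not independent, together with measurable functions f₁, f₂ : ℝ → ℝ such that f₁(X₁) = f₂(X₂) almost surely and f₁(X₁) is non-constant. Concretely: if Z is a standard Gaussian, X₁ = Z, X₂ = |Z|, then Cov(X₁, X₂) = 0, yet with f₁ = |·| and f₂ = id one has f₁(X₁) = f₂(X₂), which have correlation 1. -/

import Mathlib

open MeasureTheory ProbabilityTheory
open scoped NNReal

/-!
The map `z ↦ z * |z|` is odd and the centred Gaussian is invariant under `x ↦ -x`, so
`E[Z |Z|] = 0 = E[Z]`. Since the Gaussian has no atoms, `|Z|` is not almost surely constant and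
has positive variance. If `Z` and `|Z|` were independent, `|Z|` would be independent of itself,
so its variance, its covariance with itself, would vanish. The correlation of `|Z|` with
itself is `Var |Z| / Var |Z| = 1`.
-/

instance ProbabilityTheory.isNegInvariant_gaussianReal (v : ℝ≥0) :
    (gaussianReal 0 v).IsNegInvariant :=
  ⟨(gaussianReal_map_neg (μ := 0) (v := v)).trans (by rw [neg_zero])⟩

theorem MeasureTheory.integral_eq_zero_of_odd {G E : Type*} [AddGroup G] [MeasurableSpace G]
    [MeasurableNeg G] [NormedAddCommGroup E] [NormedSpace ℝ E] (μ : Measure G)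
    [μ.IsNegInvariant] {f : G → E} (hf : f.Odd) : ∫ x, f x ∂μ = 0 := by
  have h := integral_neg_eq_self f μ
  simp_rw [show ∀ x, f (-x) = -f x from hf, integral_neg] at h
  have h2 : (2 : ℝ) • ∫ x, f x ∂μ = 0 := by
    rw [two_smul]
    nth_rewrite 1 [← h]
    exact neg_add_cancel _
  exact (smul_eq_zero.mp h2).resolve_left two_ne_zero

theorem MeasureTheory.not_ae_abs_eq_const {μ : Measure ℝ} [NullSingletonClass μ] [NeZero μ]
    (c : ℝ) : ¬ ∀ᵐ x ∂μ, |x| = c := by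
  intro hc
  have hnull : ∀ᵐ x ∂μ, x ∉ ({c, -c} : Set ℝ) :=
    measure_eq_zero_iff_ae_notMem.mp ((Set.toFinite _).measure_zero μ)
  obtain ⟨x, hx, hx'⟩ := (hc.and hnull).exists
  exact hx' ((abs_eq (hx ▸ abs_nonneg x)).mp hx)

theorem ProbabilityTheory.variance_pos_of_not_ae_eq_const {Ω : Type*} [MeasurableSpace Ω]
    {μ : Measure Ω} [IsFiniteMeasure μ] {X : Ω → ℝ} (hX : MemLp X 2 μ)
    (h : ∀ c, ¬ ∀ᵐ ω ∂μ, X ω = c) : 0 < Var[X; μ] :=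
  (variance_nonneg X μ).lt_of_ne' fun h0 => h _ (ae_eq_integral_of_variance_eq_zero hX h0)

theorem ProbabilityTheory.correlation_self_eq_one {Ω : Type*} [MeasurableSpace Ω]
    {μ : Measure Ω} [IsProbabilityMeasure μ] {X : Ω → ℝ} (hX : MemLp X 2 μ)
    (hvar : 0 < Var[X; μ]) :
    (μ[X * X] - μ[X] * μ[X]) / (√Var[X; μ] * √Var[X; μ]) = 1 := by
  rw [← covariance_eq_sub hX hX, covariance_self hX.aemeasurable, Real.mul_self_sqrt hvar.le,
    div_self hvar.ne']

theorem ProbabilityTheory.memLp_abs_gaussianReal (m : ℝ) (v : ℝ≥0) (p : ℝ≥0) :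
    MemLp (fun x => |x|) p (gaussianReal m v) :=
  (memLp_id_gaussianReal p).abs

theorem ProbabilityTheory.variance_abs_gaussianReal_pos (m : ℝ) {v : ℝ≥0} (hv : v ≠ 0) :
    0 < Var[fun x => |x|; gaussianReal m v] :=
  have := nullSingletonClass_gaussianReal (μ := m) hv
  variance_pos_of_not_ae_eq_const (memLp_abs_gaussianReal m v 2) not_ae_abs_eq_const

theorem ProbabilityTheory.not_indepFun_id_abs_gaussianReal (m : ℝ) {v : ℝ≥0} (hv : v ≠ 0) :
    ¬ IndepFun id (fun x => |x|) (gaussianReal m v) := by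
  intro h
  have hL2 := memLp_abs_gaussianReal m v 2
  have habs : IndepFun (fun x => |x|) (fun x => |x|) (gaussianReal m v) :=
    h.comp measurable_abs measurable_id
  have hcov := habs.covariance_eq_zero hL2 hL2
  rw [covariance_self hL2.aemeasurable] at hcov
  exact (variance_abs_gaussianReal_pos m hv).ne' hcov

/-- there exist uncorrelated but dependent random variables
`X₁ = Z`, `X₂ = |Z|` (for `Z` standard Gaussian, modelled here as the identity
on `ℝ` with the standard Gaussian measure) together with measurable functions
`f₁ = |·|`, `f₂ = id` such that `f₁(X₁) = f₂(X₂)` everywhere, `f₁(X₁)` is not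
(almost surely) constant, and `f₁(X₁)`, `f₂(X₂)` have Pearson correlation 1. -/
theorem uncorrelated_but_perfectly_concurved :
    ∃ (X₁ X₂ f₁ f₂ : ℝ → ℝ),
      let μ := gaussianReal 0 1
      Measurable X₁ ∧ Measurable X₂ ∧ Measurable f₁ ∧ Measurable f₂ ∧
      X₁ = id ∧ X₂ = (fun z => |z|) ∧ f₁ = (fun x => |x|) ∧ f₂ = id ∧
      -- uncorrelated:
      (∫ z, X₁ z * X₂ z ∂μ) - (∫ z, X₁ z ∂μ) * (∫ z, X₂ z ∂μ) = 0 ∧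
      -- but not independent:
      ¬ IndepFun X₁ X₂ μ ∧
      -- perfectly concurved:
      (∀ z, f₁ (X₁ z) = f₂ (X₂ z)) ∧
      -- f₁(X₁) is non-constant:
      (¬ ∃ c : ℝ, ∀ᵐ z ∂μ, f₁ (X₁ z) = c) ∧
      -- correlation of f₁(X₁) and f₂(X₂) equals 1:
      ((∫ z, f₁ (X₁ z) * f₂ (X₂ z) ∂μ) -
          (∫ z, f₁ (X₁ z) ∂μ) * (∫ z, f₂ (X₂ z) ∂μ)) /
        (Real.sqrt (variance (f₁ ∘ X₁) μ) * Real.sqrt (variance (f₂ ∘ X₂) μ)) = 1 := by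
  refine ⟨id, fun z => |z|, fun x => |x|, id, measurable_id, measurable_abs, measurable_abs,
    measurable_id, rfl, rfl, rfl, rfl, ?_, not_indepFun_id_abs_gaussianReal 0 one_ne_zero,
    fun _ => rfl, ?_, ?_⟩
  · have hodd : Function.Odd fun z : ℝ => z * |z| := fun z => by simp only [abs_neg, neg_mul]
    simp [integral_eq_zero_of_odd _ hodd, integral_id_gaussianReal]
  · have := nullSingletonClass_gaussianReal (μ := 0) one_ne_zero
    exact fun ⟨c, hc⟩ => not_ae_abs_eq_const c hc
  · exact correlation_self_eq_one (memLp_abs_gaussianReal 0 1 2)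
      (variance_abs_gaussianReal_pos 0 one_ne_zero)
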